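/- arXiv:2412.15145 — 3 statements merged into one kernel-verified Lean document; each statement's English description precedes it below -/
import Mathlib

section
/- Let G = (V, E, w) be a locally finite connected weighted graph and W a finite proper nonempty subset of V. Then there exists a constant C = C(W) > 0 such that for any function f: V → ℝ supported on W, Σ_{x∈V} f(x)² μ(x) ≤ C Σ_{x,y∈V} |∇_{xy}f|² w_{xy}. -/
open scoped BigOperators

noncomputable def vmu {V : Type*} (w : V → V → ℝ) (x : V) : ℝ := ∑' y, w x y

noncomputable def gdiff {V : Type*} (w : V → V → ℝ) (f : V → ℝ) (x y : V) : ℝ :=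
  if 0 < w x y then f y - f x else 0

/-!
Fix a vertex `z ∉ W`; every `f` supported on `W` vanishes there. Along a path
`x = x₀ ~ x₁ ~ ⋯ ~ xₙ = z`, each edge contributes
`f(xᵢ)² ≤ 2 (f(xᵢ₊₁) - f(xᵢ))² + 2 f(xᵢ₊₁)²` with `(f(xᵢ₊₁) - f(xᵢ))² ≤ E(f) / w(xᵢ, xᵢ₊₁)`,
so `f(x)² ≤ C_x E(f)` for the Dirichlet energy `E(f)`. Summing over the finitely many
`x ∈ W` against `μ(x)` gives the inequality.
-/

namespace WeightedGraph

variable {V : Type*} (w : V → V → ℝ)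

noncomputable def energyDensity (f : V → ℝ) (p : V × V) : ℝ :=
  gdiff w f p.1 p.2 ^ 2 * w p.1 p.2

noncomputable def dirichletEnergy (f : V → ℝ) : ℝ :=
  ∑' p, energyDensity w f p

variable {w}

theorem gdiff_of_pos {f : V → ℝ} {x y : V} (h : 0 < w x y) : gdiff w f x y = f y - f x :=
  if_pos h

theorem pos_of_energyDensity_ne_zero {f : V → ℝ} {p : V × V} (h : energyDensity w f p ≠ 0) :
    0 < w p.1 p.2 := by
  by_contra hw
  exact h (by simp [energyDensity, gdiff, hw])

-- `∑'` of a non-summable family is `0`, so the edge bounds below need this.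
theorem summable_energyDensity (hsymm : ∀ x y, w x y = w y x)
    (hlf : ∀ x, {y | 0 < w x y}.Finite) {W : Set V} (hW : W.Finite) {f : V → ℝ}
    (hf : ∀ x ∉ W, f x = 0) : Summable (energyDensity w f) := by
  refine summable_of_hasFiniteSupport <| (hW.biUnion fun a _ =>
    ((Set.finite_singleton a).prod (hlf a)).union ((hlf a).prod (Set.finite_singleton a))).subset ?_
  rintro ⟨x, y⟩ hp
  have hw : 0 < w x y := pos_of_energyDensity_ne_zero hp
  have hne : f x ≠ f y := fun h => hp (by simp [energyDensity, gdiff_of_pos hw, h])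
  simp only [Set.mem_iUnion, Set.mem_union, Set.mem_prod, Set.mem_singleton_iff, Set.mem_ofPred_eq]
  by_cases hx : x ∈ W
  · exact ⟨x, hx, .inl ⟨rfl, hw⟩⟩
  · have hy : y ∈ W := by_contra fun hy => hne (by rw [hf x hx, hf y hy])
    exact ⟨y, hy, .inr ⟨hsymm y x ▸ hw, rfl⟩⟩

theorem dirichletEnergy_nonneg (hnonneg : ∀ x y, 0 ≤ w x y) (f : V → ℝ) :
    0 ≤ dirichletEnergy w f :=
  tsum_nonneg fun _ => mul_nonneg (sq_nonneg _) (hnonneg _ _)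

theorem sq_sub_le_dirichletEnergy_div (hnonneg : ∀ x y, 0 ≤ w x y) {f : V → ℝ}
    (hs : Summable (energyDensity w f)) {x y : V} (hxy : 0 < w x y) :
    (f y - f x) ^ 2 ≤ dirichletEnergy w f / w x y := by
  rw [le_div_iff₀ hxy]
  have := hs.le_tsum (x, y) fun _ _ => mul_nonneg (sq_nonneg _) (hnonneg _ _)
  simpa [dirichletEnergy, energyDensity, gdiff_of_pos hxy] using this

theorem exists_sq_le_mul_dirichletEnergy (hnonneg : ∀ x y, 0 ≤ w x y) {x z : V}
    (hxz : Relation.ReflTransGen (fun a b => 0 < w a b) x z) :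
    ∃ C ≥ (0 : ℝ), ∀ f : V → ℝ, Summable (energyDensity w f) → f z = 0 →
      f x ^ 2 ≤ C * dirichletEnergy w f := by
  induction hxz using Relation.ReflTransGen.head_induction_on with
  | refl => exact ⟨0, le_rfl, fun f _ hfz => by simp [hfz]⟩
  | @head a b hab _ ih =>
    obtain ⟨C, hC, hb⟩ := ih
    refine ⟨2 / w a b + 2 * C, by positivity, fun f hs hfz => ?_⟩
    have hedge := sq_sub_le_dirichletEnergy_div hnonneg hs hab
    calc f a ^ 2 ≤ 2 * (f b - f a) ^ 2 + 2 * f b ^ 2 := by nlinarith [sq_nonneg (f a - 2 * f b)]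
      _ ≤ 2 * (dirichletEnergy w f / w a b) + 2 * (C * dirichletEnergy w f) := by
        gcongr
        exact hb f hs hfz
      _ = (2 / w a b + 2 * C) * dirichletEnergy w f := by ring

end WeightedGraph

open WeightedGraph in
theorem poincare_inequality_general {V : Type*} (w : V → V → ℝ)
    (hsymm : ∀ x y, w x y = w y x) (hnonneg : ∀ x y, 0 ≤ w x y)
    (hlf : ∀ x, {y | 0 < w x y}.Finite)
    (hconn : ∀ x y : V, Relation.ReflTransGen (fun a b => 0 < w a b) x y)
    (W : Set V) (hWfin : W.Finite) (hWproper : W ≠ Set.univ) :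
    ∃ C > (0:ℝ), ∀ f : V → ℝ, (∀ x ∉ W, f x = 0) →
      ∑' x, (f x)^2 * vmu w x
        ≤ C * ∑' p : V × V, (gdiff w f p.1 p.2)^2 * w p.1 p.2 := by
  obtain ⟨z, hz⟩ := (Set.ne_univ_iff_exists_notMem W).mp hWproper
  choose C hC hCf using fun x => exists_sq_le_mul_dirichletEnergy hnonneg (hconn x z)
  have hμ (x : V) : 0 ≤ vmu w x := tsum_nonneg (hnonneg x)
  set S := hWfin.toFinset
  refine ⟨∑ x ∈ S, C x * vmu w x + 1,
    by positivity [Finset.sum_nonneg fun x (_ : x ∈ S) => mul_nonneg (hC x) (hμ x)], ?_⟩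
  intro f hf
  have hs := summable_energyDensity hsymm hlf hWfin hf
  have hE := dirichletEnergy_nonneg hnonneg f
  change _ ≤ _ * dirichletEnergy w f
  calc ∑' x, f x ^ 2 * vmu w x = ∑ x ∈ S, f x ^ 2 * vmu w x :=
        tsum_eq_sum fun x hx => by simp [hf x (by simpa [S] using hx)]
    _ ≤ ∑ x ∈ S, C x * dirichletEnergy w f * vmu w x :=
        Finset.sum_le_sum fun x _ => by gcongr; exacts [hμ x, hCf x f hs (hf z hz)]
    _ = (∑ x ∈ S, C x * vmu w x) * dirichletEnergy w f := by
        rw [Finset.sum_mul]; exact Finset.sum_congr rfl fun x _ => by ring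
    _ ≤ (∑ x ∈ S, C x * vmu w x + 1) * dirichletEnergy w f := by nlinarith

/-- Discrete Poincaré inequality for a finite proper nonempty subset `W`. -/
theorem poincare_inequality {V : Type*} (w : V → V → ℝ)
    (hsymm : ∀ x y, w x y = w y x) (hnonneg : ∀ x y, 0 ≤ w x y)
    (hlf : ∀ x, {y | 0 < w x y}.Finite)
    (hconn : ∀ x y : V, Relation.ReflTransGen (fun a b => 0 < w a b) x y)
    (W : Set V) (hWfin : W.Finite) (hWne : W.Nonempty) (hWproper : W ≠ Set.univ) :
    ∃ C > (0:ℝ), ∀ f : V → ℝ, (∀ x ∉ W, f x = 0) →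
      ∑' x, (f x)^2 * vmu w x
        ≤ C * ∑' p : V × V, (gdiff w f p.1 p.2)^2 * w p.1 p.2 :=
  poincare_inequality_general w hsymm hnonneg hlf hconn W hWfin hWproper
end

section
/- Let G₀ be a locally finite connected weighted graph, G = G₀ □ ℤ, W = W₀ × ℤ with W₀ a finite proper nonempty subset of V₀. There exists ε > 0 depending only on G such that: if c: V → ℝ satisfies c ≤ ε and u: V × ℝ_{≤0} → ℝ solves ∂_t u = Δu + cu on W × ℝ_{≤0} with u = 0 on (V∖W) × ℝ_{≤0}, then for all integers R > r > 0, ∫_{Q_r} u² ≤ (C/(R-r)²)(∫_{Q_R} u² - ∫_{Q_r} u²) for some constant C depending only on G, where Q_r = [-r², 0] × (V₀ × ([-r,r]∩ℤ)) and ∫_{Q_r} u² = ∫_{-r²}^0 Σ_{x∈D_r} u(x,t)² μ(x) dt. -/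
open scoped BigOperators

attribute [local instance] Classical.propDecidable

noncomputable def glap {V : Type*} (w : V → V → ℝ) (f : V → ℝ) (x : V) : ℝ :=
  (∑' y, w x y * (f y - f x)) / vmu w x

/-- Edge weights of the strip-type graph `G₀ □ ℤ` (with `p = q = 1`). -/
noncomputable def wProdZ {V₀ : Type*} (w0 : V₀ → V₀ → ℝ) :
    (V₀ × ℤ) → (V₀ × ℤ) → ℝ := fun x y =>
  if x.1 = y.1 ∧ |x.2 - y.2| = 1 then vmu w0 x.1
  else if x.2 = y.2 ∧ 0 < w0 x.1 y.1 then 2 * w0 x.1 y.1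
  else 0

/-- Space-time energy `∫_{Q_r} u² = ∫_{-r²}^0 Σ_{x ∈ D_r} u(x,t)² μ(x) dt`,
where `D_r = V₀ × ([-r,r] ∩ ℤ)`. -/
noncomputable def Qint {V₀ : Type*} (w0 : V₀ → V₀ → ℝ) (u : V₀ × ℤ → ℝ → ℝ)
    (r : ℕ) : ℝ :=
  ∫ t in (-(r:ℝ)^2)..(0:ℝ),
    ∑' x : V₀ × ℤ, if |x.2| ≤ (r:ℤ) then (u x t)^2 * vmu (wProdZ w0) x else 0

/-! Multiply the equation by `u ψ²`, where `ψ(z)` is `1` for `|z| ≤ r`, `0` for `|z| ≥ R` and has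
slope `1/(R - r)`. Summation by parts and a Caccioppoli pair inequality bound the Dirichlet energy
of `u ψ` by the energy change plus `(R - r)⁻²` times the mass in the annulus `r < |z| ≤ R`, where
`ψ` is not constant. On every horizontal slice, the Dirichlet Poincaré inequality of `W₀` in `G₀`
(its constant `λ > 0` comes from compactness, because every vertex of `W₀` is joined to a vertex
outside it) lets the energy dominate `λ/2` times the mass of `u ψ`, which absorbs the potential
`c ≤ λ/32`. So `F(t) = Σ u² ψ² μ` satisfies `F' ≤ -(λ/16) F + (5/2) (R - r)⁻² A`, where `A` is the
annulus mass. Integrating from `s ∈ [-R², -r²]` to `0` and averaging over `s` gives the claim,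
with `C = 56/λ`. -/

lemma caccioppoli_pair_of_le {a b p q : ℝ} (hp : 0 ≤ p) (hpq : p ≤ q) :
    (b * q - a * p) ^ 2 ≤ 4 * ((b - a) * (b * q ^ 2 - a * p ^ 2)) + 10 * (q - p) ^ 2 * a ^ 2 := by
  -- `b q - a p = (b - a) q + a (q - p)` and `b q² - a p² = (b - a) q² + a (q - p) (q + p)`
  nlinarith [sq_nonneg ((b - a) * q + 2 * a * (q - p)), sq_nonneg ((b - a) * q - a * (q - p)),
    mul_nonneg (mul_nonneg hp (sub_nonneg.2 hpq)) (sq_nonneg (b - a)),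
    mul_nonneg (sq_nonneg a) (sq_nonneg (q - p)), sq_nonneg ((b - a) * p),
    sq_nonneg ((b - a) * (q - p))]

lemma caccioppoli_pair {a b p q ca cb : ℝ} (hp : 0 ≤ p) (hq : 0 ≤ q) (hca : 0 ≤ ca)
    (hcb : 0 ≤ cb) (hpq : p < q → ca = 1) (hqp : q < p → cb = 1) :
    (b * q - a * p) ^ 2 ≤
      4 * ((b - a) * (b * q ^ 2 - a * p ^ 2)) + 10 * (q - p) ^ 2 * (ca * a ^ 2 + cb * b ^ 2) := by
  rcases lt_trichotomy p q with h | rfl | h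
  · have := caccioppoli_pair_of_le (a := a) (b := b) hp h.le
    rw [hpq h]
    nlinarith [mul_nonneg (mul_nonneg hcb (sq_nonneg b)) (sq_nonneg (q - p))]
  · nlinarith [mul_nonneg (sq_nonneg (b - a)) (sq_nonneg p),
      mul_nonneg (mul_nonneg hcb (sq_nonneg b)) (sq_nonneg (p - p))]
  · have := caccioppoli_pair_of_le (a := b) (b := a) hq h.le
    rw [hqp h]
    nlinarith [mul_nonneg (mul_nonneg hca (sq_nonneg a)) (sq_nonneg (q - p))]

section WeightedGraph

open Finset

variable {V : Type*} {w : V → V → ℝ}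

lemma vmu_nonneg (hnonneg : ∀ x y, 0 ≤ w x y) (x : V) : 0 ≤ vmu w x :=
  tsum_nonneg (hnonneg x)

lemma vmu_eq_sum (hnonneg : ∀ x y, 0 ≤ w x y) (hlf : ∀ x, {y | 0 < w x y}.Finite) (x : V) :
    vmu w x = ∑ y ∈ (hlf x).toFinset, w x y :=
  tsum_eq_sum fun y hy => le_antisymm (by simpa using hy) (hnonneg x y)

/-- Also valid where `vmu w x = 0` and `glap` divides by zero: then every weight at `x` vanishes. -/
lemma glap_mul_vmu {B : Finset V} {x : V} (hw : ∀ y, 0 ≤ w x y) (hB : ∀ y ∉ B, w x y = 0)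
    (f : V → ℝ) : glap w f x * vmu w x = ∑ y ∈ B, w x y * (f y - f x) := by
  have hvmu : vmu w x = ∑ y ∈ B, w x y := tsum_eq_sum hB
  rcases eq_or_ne (vmu w x) 0 with h0 | h0
  · have hzero := (sum_eq_zero_iff_of_nonneg fun y _ => hw y).1 (hvmu ▸ h0)
    rw [h0, mul_zero, sum_eq_zero fun y hy => by rw [hzero y hy, zero_mul]]
  · rw [glap, div_mul_cancel₀ _ h0, tsum_eq_sum fun y hy => by rw [hB y hy, zero_mul]]

lemma two_mul_sum_mul_sum_sub_eq (hsymm : ∀ x y, w x y = w y x) (B : Finset V) (f g : V → ℝ) :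
    2 * ∑ x ∈ B, g x * ∑ y ∈ B, w x y * (f y - f x) =
      -∑ x ∈ B, ∑ y ∈ B, w x y * (f y - f x) * (g y - g x) := by
  have hswap : ∑ x ∈ B, g x * ∑ y ∈ B, w x y * (f y - f x) =
      ∑ x ∈ B, ∑ y ∈ B, -(w x y * (f y - f x) * g y) := by
    simp_rw [mul_sum]
    rw [sum_comm]
    refine sum_congr rfl fun x _ => sum_congr rfl fun y _ => ?_
    rw [hsymm]; ring
  rw [two_mul]
  nth_rewrite 2 [hswap]
  simp_rw [mul_sum, ← sum_add_distrib, ← sum_neg_distrib]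
  refine sum_congr rfl fun x _ => sum_congr rfl fun y _ => ?_
  ring

/-- `χ` is `1` at the endpoint of each edge where `ψ` is smaller: that endpoint carries the
gradient of `ψ`. -/
lemma caccioppoli_sum (hsymm : ∀ x y, w x y = w y x) (hnonneg : ∀ x y, 0 ≤ w x y)
    (B : Finset V) (f ψ χ : V → ℝ) (hψ : ∀ x, 0 ≤ ψ x) (hχ : ∀ x, 0 ≤ χ x)
    (hout : ∀ x y, 0 < w x y → ψ x < ψ y → χ x = 1) :
    8 * ∑ x ∈ B, f x * ψ x ^ 2 * ∑ y ∈ B, w x y * (f y - f x) ≤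
      -∑ x ∈ B, ∑ y ∈ B, w x y * (f y * ψ y - f x * ψ x) ^ 2 +
        20 * ∑ x ∈ B, χ x * f x ^ 2 * ∑ y ∈ B, w x y * (ψ y - ψ x) ^ 2 := by
  have hpair : ∀ x y, w x y * (f y * ψ y - f x * ψ x) ^ 2 ≤
      4 * (w x y * (f y - f x) * (f y * ψ y ^ 2 - f x * ψ x ^ 2)) +
        10 * (w x y * (ψ y - ψ x) ^ 2 * (χ x * f x ^ 2 + χ y * f y ^ 2)) := by
    intro x y
    rcases (hnonneg x y).eq_or_lt with h0 | hpos
    · simp [← h0]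
    have := caccioppoli_pair (a := f x) (b := f y) (hψ x) (hψ y) (hχ x) (hχ y)
      (hout x y hpos) (hout y x (hsymm x y ▸ hpos))
    nlinarith [mul_le_mul_of_nonneg_left this hpos.le]
  have hgreen := two_mul_sum_mul_sum_sub_eq hsymm B f (fun x => f x * ψ x ^ 2)
  have hswap : ∑ x ∈ B, ∑ y ∈ B, w x y * (ψ y - ψ x) ^ 2 * (χ y * f y ^ 2) =
      ∑ x ∈ B, ∑ y ∈ B, w x y * (ψ y - ψ x) ^ 2 * (χ x * f x ^ 2) := by
    rw [sum_comm]
    refine sum_congr rfl fun x _ => sum_congr rfl fun y _ => ?_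
    rw [hsymm]; ring
  have hχsum : ∑ x ∈ B, ∑ y ∈ B, w x y * (ψ y - ψ x) ^ 2 * (χ x * f x ^ 2) =
      ∑ x ∈ B, χ x * f x ^ 2 * ∑ y ∈ B, w x y * (ψ y - ψ x) ^ 2 := by
    simp_rw [mul_sum]
    refine sum_congr rfl fun x _ => sum_congr rfl fun y _ => ?_
    ring
  have hsum := sum_le_sum fun x (_ : x ∈ B) => sum_le_sum fun y (_ : y ∈ B) => hpair x y
  simp_rw [sum_add_distrib, ← mul_sum, mul_add, sum_add_distrib] at hsum
  linarith

end WeightedGraph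

lemma exists_pos_mul_le_of_homogeneous {E : Type*} [NormedAddCommGroup E] [NormedSpace ℝ E]
    [FiniteDimensional ℝ E] {N Q : E → ℝ} (hN : Continuous N) (hQ : Continuous Q)
    (hNsmul : ∀ (t : ℝ) g, N (t • g) = t ^ 2 * N g)
    (hQsmul : ∀ (t : ℝ) g, Q (t • g) = t ^ 2 * Q g)
    (hQpos : ∀ g, g ≠ 0 → 0 < Q g) : ∃ lam > 0, ∀ g, lam * N g ≤ Q g := by
  have hN0 : N 0 = 0 := by simpa using hNsmul 0 0
  have hQ0 : Q 0 = 0 := by simpa using hQsmul 0 0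
  have hnormalize : ∀ g : E, g ≠ 0 → ‖g‖⁻¹ • g ∈ Metric.sphere (0 : E) 1 := fun g hg => by
    simp [norm_smul, hg]
  have hscale : ∀ F : E → ℝ, (∀ (t : ℝ) g, F (t • g) = t ^ 2 * F g) →
      ∀ g : E, g ≠ 0 → F g = ‖g‖ ^ 2 * F (‖g‖⁻¹ • g) := fun F hF g hg => by
    rw [← hF, smul_smul, mul_inv_cancel₀ (norm_ne_zero_iff.2 hg), one_smul]
  rcases (Metric.sphere (0 : E) 1).eq_empty_or_nonempty with hS | hS
  · refine ⟨1, one_pos, fun g => ?_⟩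
    obtain rfl : g = 0 := by
      by_contra hg
      simpa [hS] using hnormalize g hg
    simp [hN0, hQ0]
  obtain ⟨g₀, hg₀, hmin⟩ := (isCompact_sphere (0 : E) 1).exists_isMinOn hS hQ.continuousOn
  obtain ⟨g₁, -, hmax⟩ := (isCompact_sphere (0 : E) 1).exists_isMaxOn hS hN.continuousOn
  have hm : 0 < Q g₀ := hQpos g₀ (ne_zero_of_mem_sphere one_ne_zero ⟨g₀, hg₀⟩)
  have hM : 0 < max (N g₁) 1 := lt_max_of_lt_right one_pos
  refine ⟨Q g₀ / max (N g₁) 1, div_pos hm hM, fun g => ?_⟩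
  rcases eq_or_ne g 0 with rfl | hg
  · simp [hN0, hQ0]
  have hĝ := hnormalize g hg
  have hNg : N g ≤ ‖g‖ ^ 2 * max (N g₁) 1 := by
    rw [hscale N hNsmul g hg]
    exact mul_le_mul_of_nonneg_left ((isMaxOn_iff.1 hmax _ hĝ).trans (le_max_left _ _))
      (sq_nonneg _)
  have hQg : ‖g‖ ^ 2 * Q g₀ ≤ Q g := by
    rw [hscale Q hQsmul g hg]
    exact mul_le_mul_of_nonneg_left (isMinOn_iff.1 hmin _ hĝ) (sq_nonneg _)
  calc Q g₀ / max (N g₁) 1 * N g ≤ Q g₀ / max (N g₁) 1 * (‖g‖ ^ 2 * max (N g₁) 1) :=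
        mul_le_mul_of_nonneg_left hNg (div_pos hm hM).le
    _ = ‖g‖ ^ 2 * Q g₀ := by field_simp
    _ ≤ Q g := hQg

section BaseGraph

open Finset

variable {V₀ : Type*} {w0 : V₀ → V₀ → ℝ}

noncomputable def closedNbhd (hlf : ∀ x, {y | 0 < w0 x y}.Finite) (W : Finset V₀) :
    Finset V₀ :=
  W ∪ W.biUnion fun a => (hlf a).toFinset

lemma subset_closedNbhd (hlf : ∀ x, {y | 0 < w0 x y}.Finite) (W : Finset V₀) :
    W ⊆ closedNbhd hlf W :=
  subset_union_left

lemma mem_closedNbhd_of_pos (hlf : ∀ x, {y | 0 < w0 x y}.Finite) {W : Finset V₀} {a b : V₀}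
    (ha : a ∈ W) (hab : 0 < w0 a b) : b ∈ closedNbhd hlf W :=
  mem_union_right _ (mem_biUnion.2 ⟨a, ha, by simpa using hab⟩)

def DirichletPoincare (w0 : V₀ → V₀ → ℝ) (W₀ : Set V₀) (S : Finset V₀) (lam : ℝ) : Prop :=
  ∀ φ : V₀ → ℝ, (∀ a ∉ W₀, φ a = 0) →
    lam * ∑ a ∈ S, φ a ^ 2 * vmu w0 a ≤ ∑ a ∈ S, ∑ b ∈ S, w0 a b * (φ b - φ a) ^ 2

lemma eq_zero_of_eq_on_edges {W₀ : Set V₀} {y₀ : V₀}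
    (hreach : ∀ x, Relation.ReflTransGen (fun a b => 0 < w0 a b) x y₀) (hy₀ : y₀ ∉ W₀)
    {φ : V₀ → ℝ} (hφ : ∀ a ∉ W₀, φ a = 0) (hedge : ∀ a ∈ W₀, ∀ b, 0 < w0 a b → φ a = φ b)
    (x : V₀) : φ x = 0 := by
  refine Relation.ReflTransGen.head_induction_on (motive := fun a _ => φ a = 0) (hreach x)
    (hφ y₀ hy₀) fun {a c} hac _ ih => ?_
  by_cases ha : a ∈ W₀
  · rw [hedge a ha c hac, ih]
  · exact hφ a ha

lemma eq_zero_of_dirichlet_energy_eq_zero (hnonneg : ∀ x y, 0 ≤ w0 x y)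
    (hlf : ∀ x, {y | 0 < w0 x y}.Finite) {W₀ : Set V₀} (hW₀fin : W₀.Finite) {y₀ : V₀}
    (hreach : ∀ x, Relation.ReflTransGen (fun a b => 0 < w0 a b) x y₀) (hy₀ : y₀ ∉ W₀)
    {φ : V₀ → ℝ} (hφ : ∀ a ∉ W₀, φ a = 0)
    (henergy : ∑ a ∈ closedNbhd hlf hW₀fin.toFinset, ∑ b ∈ closedNbhd hlf hW₀fin.toFinset,
      w0 a b * (φ b - φ a) ^ 2 = 0) : φ = 0 := by
  have hterm := fun a ha => (sum_eq_zero_iff_of_nonneg fun b _ =>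
    mul_nonneg (hnonneg a b) (sq_nonneg _)).1 ((sum_eq_zero_iff_of_nonneg fun a _ =>
      sum_nonneg fun b _ => mul_nonneg (hnonneg a b) (sq_nonneg _)).1 henergy a ha)
  refine funext (eq_zero_of_eq_on_edges hreach hy₀ hφ fun a ha b hab => ?_)
  have hmem : a ∈ hW₀fin.toFinset := by simpa using ha
  rcases mul_eq_zero.1 (hterm a (subset_closedNbhd hlf _ hmem) b
    (mem_closedNbhd_of_pos hlf hmem hab)) with h | h
  · exact absurd h hab.ne'
  · linarith [pow_eq_zero_iff (n := 2) two_ne_zero |>.1 h]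

lemma exists_dirichletPoincare (hnonneg : ∀ x y, 0 ≤ w0 x y)
    (hlf : ∀ x, {y | 0 < w0 x y}.Finite)
    (hconn : ∀ x y : V₀, Relation.ReflTransGen (fun a b => 0 < w0 a b) x y)
    {W₀ : Set V₀} (hW₀fin : W₀.Finite) (hW₀proper : W₀ ≠ Set.univ) :
    ∃ lam > 0, DirichletPoincare w0 W₀ (closedNbhd hlf hW₀fin.toFinset) lam := by
  obtain ⟨y₀, hy₀⟩ : ∃ y₀, y₀ ∉ W₀ := by
    by_contra! h
    exact hW₀proper (Set.eq_univ_of_forall h)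
  have := hW₀fin.fintype
  set S := closedNbhd hlf hW₀fin.toFinset
  set L := Function.ExtendByZero.linearMap ℝ (Subtype.val : W₀ → V₀)
  have hL : ∀ a, Continuous fun g => L g a := fun a =>
    ((LinearMap.proj a).comp L).continuous_of_finiteDimensional
  have hLval : ∀ g (a : W₀), L g a = g a := fun g a =>
    Subtype.val_injective.extend_apply g 0 a
  have hLout : ∀ g, ∀ a ∉ W₀, L g a = 0 := fun g a ha =>
    (Function.extend_apply' _ _ _ fun ⟨b, hb⟩ => ha (hb ▸ b.2)).trans rfl
  obtain ⟨lam, hlam, hpoinc⟩ := exists_pos_mul_le_of_homogeneous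
    (N := fun g => ∑ a ∈ S, L g a ^ 2 * vmu w0 a)
    (Q := fun g => ∑ a ∈ S, ∑ b ∈ S, w0 a b * (L g b - L g a) ^ 2)
    (by fun_prop) (by fun_prop)
    (fun t g => by
      simp only [map_smul, Pi.smul_apply, smul_eq_mul, mul_sum]
      exact sum_congr rfl fun a _ => by ring)
    (fun t g => by
      simp only [map_smul, Pi.smul_apply, smul_eq_mul, mul_sum]
      exact sum_congr rfl fun a _ => sum_congr rfl fun b _ => by ring)
    (fun g hg => (sum_nonneg fun a _ => sum_nonneg fun b _ =>
      mul_nonneg (hnonneg a b) (sq_nonneg _)).lt_of_ne fun hQ => hg (funext fun a => by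
        simpa [hLval] using congrFun (eq_zero_of_dirichlet_energy_eq_zero hnonneg hlf hW₀fin
          (hconn · y₀) hy₀ (hLout g) hQ.symm) a))
  refine ⟨lam, hlam, fun φ hφ => ?_⟩
  have hLφ : L (fun a => φ a) = φ := funext fun a => by
    by_cases ha : a ∈ W₀
    · exact hLval _ ⟨a, ha⟩
    · rw [hLout _ a ha, hφ a ha]
  simpa only [hLφ] using hpoinc fun a => φ a

end BaseGraph

section Strip

open Finset

variable {V₀ : Type*} {w0 : V₀ → V₀ → ℝ}

lemma wProdZ_nonneg (hnonneg : ∀ x y, 0 ≤ w0 x y) (x y : V₀ × ℤ) : 0 ≤ wProdZ w0 x y := by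
  unfold wProdZ
  split_ifs
  · exact vmu_nonneg hnonneg _
  · linarith [hnonneg x.1 y.1]
  · exact le_rfl

lemma wProdZ_symm (hsymm : ∀ x y, w0 x y = w0 y x) (x y : V₀ × ℤ) :
    wProdZ w0 x y = wProdZ w0 y x := by
  unfold wProdZ
  simp only [eq_comm (a := x.1), eq_comm (a := x.2), abs_sub_comm x.2, hsymm x.1 y.1]
  split_ifs with h <;> first | rfl | rw [h.1]

lemma wProdZ_same_snd (hnonneg : ∀ x y, 0 ≤ w0 x y) (x : V₀ × ℤ) (b : V₀) :
    wProdZ w0 x (b, x.2) = 2 * w0 x.1 b := by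
  unfold wProdZ
  rcases (hnonneg x.1 b).eq_or_lt with h | h
  · simp [← h]
  · simp [h]

lemma abs_sub_snd_eq_one_of_wProdZ_pos {x y : V₀ × ℤ} (hxy : 0 < wProdZ w0 x y)
    (hne : x.2 ≠ y.2) : |x.2 - y.2| = 1 := by
  unfold wProdZ at hxy
  split_ifs at hxy with h₁ h₂
  · exact h₁.2
  · exact absurd h₂.1 hne
  · exact absurd hxy (lt_irrefl 0)

noncomputable def stripNbhd (hlf : ∀ x, {y | 0 < w0 x y}.Finite) (x : V₀ × ℤ) :
    Finset (V₀ × ℤ) :=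
  (hlf x.1).toFinset.image (fun a => (a, x.2)) ∪ {(x.1, x.2 + 1), (x.1, x.2 - 1)}

lemma wProdZ_eq_zero_of_notMem_stripNbhd (hlf : ∀ x, {y | 0 < w0 x y}.Finite)
    {x y : V₀ × ℤ} (hy : y ∉ stripNbhd hlf x) : wProdZ w0 x y = 0 := by
  unfold wProdZ
  split_ifs with h₁ h₂
  · rcases abs_eq (zero_le_one' ℤ) |>.1 h₁.2 with h | h <;>
      exact absurd (by simp [stripNbhd, Prod.ext_iff, h₁.1]; omega) hy
  · exact absurd (by simp [stripNbhd, Prod.ext_iff, h₂.1, h₂.2]) hy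
  · rfl

lemma sum_stripNbhd (hnonneg : ∀ x y, 0 ≤ w0 x y) (hlf : ∀ x, {y | 0 < w0 x y}.Finite)
    (x : V₀ × ℤ) (g : V₀ × ℤ → ℝ) :
    ∑ y ∈ stripNbhd hlf x, wProdZ w0 x y * g y =
      2 * ∑ a ∈ (hlf x.1).toFinset, w0 x.1 a * g (a, x.2) +
        vmu w0 x.1 * (g (x.1, x.2 + 1) + g (x.1, x.2 - 1)) := by
  have hdisj : Disjoint ((hlf x.1).toFinset.image fun a => (a, x.2))
      ({(x.1, x.2 + 1), (x.1, x.2 - 1)} : Finset (V₀ × ℤ)) := by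
    simp only [disjoint_left, mem_image, mem_insert, mem_singleton, Prod.ext_iff]
    omega
  have hvert : ∀ z : ℤ, |x.2 - z| = 1 → wProdZ w0 x (x.1, z) = vmu w0 x.1 := fun z hz => by
    simp [wProdZ, hz]
  rw [stripNbhd, sum_union hdisj, sum_image (by simp),
    sum_pair (by simp only [ne_eq, Prod.ext_iff]; omega), hvert _ (by simp), hvert _ (by simp),
    mul_sum]
  congr 1
  · exact sum_congr rfl fun a _ => by rw [wProdZ_same_snd hnonneg]; ring
  · ring

lemma tsum_wProdZ_mul (hlf : ∀ x, {y | 0 < w0 x y}.Finite) (x : V₀ × ℤ) (g : V₀ × ℤ → ℝ) :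
    ∑' y, wProdZ w0 x y * g y = ∑ y ∈ stripNbhd hlf x, wProdZ w0 x y * g y :=
  tsum_eq_sum fun y hy => by rw [wProdZ_eq_zero_of_notMem_stripNbhd hlf hy, zero_mul]

lemma vmu_wProdZ (hnonneg : ∀ x y, 0 ≤ w0 x y) (hlf : ∀ x, {y | 0 < w0 x y}.Finite)
    (x : V₀ × ℤ) : vmu (wProdZ w0) x = 4 * vmu w0 x.1 := by
  have htsum := tsum_wProdZ_mul hlf x 1
  have hsum := sum_stripNbhd hnonneg hlf x 1
  simp only [Pi.one_apply, mul_one] at htsum hsum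
  rw [vmu, htsum, hsum, ← vmu_eq_sum hnonneg hlf]
  ring

lemma sum_wProdZ_sub_sq_le (hnonneg : ∀ x y, 0 ≤ w0 x y) (hlf : ∀ x, {y | 0 < w0 x y}.Finite)
    (B : Finset (V₀ × ℤ)) {ψ : ℤ → ℝ} {L : ℝ} (hψ : ∀ z, |ψ (z + 1) - ψ z| ≤ L)
    (x : V₀ × ℤ) :
    ∑ y ∈ B, wProdZ w0 x y * (ψ y.2 - ψ x.2) ^ 2 ≤ 2 * vmu w0 x.1 * L ^ 2 := by
  have hterm : ∀ y, 0 ≤ wProdZ w0 x y * (ψ y.2 - ψ x.2) ^ 2 := fun y =>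
    mul_nonneg (wProdZ_nonneg hnonneg x y) (sq_nonneg _)
  have hsq : ∀ z, (ψ (z + 1) - ψ z) ^ 2 ≤ L ^ 2 := fun z =>
    sq_le_sq' (abs_le.1 (hψ z)).1 (abs_le.1 (hψ z)).2
  calc ∑ y ∈ B, wProdZ w0 x y * (ψ y.2 - ψ x.2) ^ 2
      ≤ ∑ y ∈ B ∪ stripNbhd hlf x, wProdZ w0 x y * (ψ y.2 - ψ x.2) ^ 2 :=
        sum_le_sum_of_subset_of_nonneg subset_union_left fun y _ _ => hterm y
    _ = ∑ y ∈ stripNbhd hlf x, wProdZ w0 x y * (ψ y.2 - ψ x.2) ^ 2 :=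
        (sum_subset subset_union_right fun y _ hy => by
          rw [wProdZ_eq_zero_of_notMem_stripNbhd hlf hy, zero_mul]).symm
    _ = vmu w0 x.1 * ((ψ (x.2 + 1) - ψ x.2) ^ 2 + (ψ (x.2 - 1 + 1) - ψ (x.2 - 1)) ^ 2) := by
        rw [sum_stripNbhd hnonneg hlf x fun y => (ψ y.2 - ψ x.2) ^ 2]
        simp only [sub_self, sub_add_cancel, ne_eq, OfNat.ofNat_ne_zero, not_false_eq_true,
          zero_pow, mul_zero, sum_const_zero]
        ring
    _ ≤ 2 * vmu w0 x.1 * L ^ 2 := by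
        nlinarith [hsq x.2, hsq (x.2 - 1), vmu_nonneg hnonneg x.1]

lemma DirichletPoincare.strip {W₀ : Set V₀} {S : Finset V₀} {lam : ℝ}
    (hP : DirichletPoincare w0 W₀ S lam) (hnonneg : ∀ x y, 0 ≤ w0 x y)
    (hlf : ∀ x, {y | 0 < w0 x y}.Finite) (Z : Finset ℤ) {h : V₀ × ℤ → ℝ}
    (hh : ∀ x, x.1 ∉ W₀ → h x = 0) :
    lam / 2 * ∑ x ∈ S ×ˢ Z, h x ^ 2 * vmu (wProdZ w0) x ≤
      ∑ x ∈ S ×ˢ Z, ∑ y ∈ S ×ˢ Z, wProdZ w0 x y * (h y - h x) ^ 2 := by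
  have hrow : ∀ x ∈ S ×ˢ Z, 2 * ∑ b ∈ S, w0 x.1 b * (h (b, x.2) - h x) ^ 2 ≤
      ∑ y ∈ S ×ˢ Z, wProdZ w0 x y * (h y - h x) ^ 2 := fun x hx => by
    calc 2 * ∑ b ∈ S, w0 x.1 b * (h (b, x.2) - h x) ^ 2
        = ∑ y ∈ S.image (·, x.2), wProdZ w0 x y * (h y - h x) ^ 2 := by
          rw [sum_image (by simp), mul_sum]
          exact sum_congr rfl fun b _ => by rw [wProdZ_same_snd hnonneg]; ring
      _ ≤ ∑ y ∈ S ×ˢ Z, wProdZ w0 x y * (h y - h x) ^ 2 :=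
          sum_le_sum_of_subset_of_nonneg
            (fun y hy => by
              obtain ⟨b, hb, rfl⟩ := mem_image.1 hy
              exact mem_product.2 ⟨hb, (mem_product.1 hx).2⟩)
            fun y _ _ => mul_nonneg (wProdZ_nonneg hnonneg x y) (sq_nonneg _)
  calc lam / 2 * ∑ x ∈ S ×ˢ Z, h x ^ 2 * vmu (wProdZ w0) x
      = 2 * ∑ z ∈ Z, lam * ∑ a ∈ S, h (a, z) ^ 2 * vmu w0 a := by
        simp only [sum_product_right, mul_sum, vmu_wProdZ hnonneg hlf]
        exact sum_congr rfl fun z _ => sum_congr rfl fun a _ => by ring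
    _ ≤ 2 * ∑ z ∈ Z, ∑ a ∈ S, ∑ b ∈ S, w0 a b * (h (b, z) - h (a, z)) ^ 2 := by
        gcongr with z
        exact hP (fun a => h (a, z)) fun a ha => hh (a, z) ha
    _ = ∑ x ∈ S ×ˢ Z, 2 * ∑ b ∈ S, w0 x.1 b * (h (b, x.2) - h x) ^ 2 := by
        rw [sum_product_right, mul_sum]
        simp only [mul_sum]
    _ ≤ _ := sum_le_sum hrow

noncomputable def cutoff (r R : ℕ) (z : ℤ) : ℝ :=
  max 0 (min 1 (((R : ℝ) - (|z| : ℤ)) / ((R : ℝ) - r)))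

lemma cutoff_nonneg (r R : ℕ) (z : ℤ) : 0 ≤ cutoff r R z :=
  le_max_left _ _

lemma cutoff_le_one (r R : ℕ) (z : ℤ) : cutoff r R z ≤ 1 :=
  max_le zero_le_one (min_le_left _ _)

lemma cutoff_eq_one {r R : ℕ} (hrR : r < R) {z : ℤ} (hz : |z| ≤ r) : cutoff r R z = 1 := by
  have hRr : (0 : ℝ) < R - r := sub_pos.2 (Nat.cast_lt.2 hrR)
  have hz' : ((|z| : ℤ) : ℝ) ≤ r := by exact_mod_cast hz
  rw [cutoff, min_eq_left ((one_le_div hRr).2 (by linarith)), max_eq_right zero_le_one]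

lemma cutoff_eq_zero {r R : ℕ} (hrR : r < R) {z : ℤ} (hz : R ≤ |z|) : cutoff r R z = 0 := by
  have hRr : (0 : ℝ) < R - r := sub_pos.2 (Nat.cast_lt.2 hrR)
  have hz' : (R : ℝ) ≤ ((|z| : ℤ) : ℝ) := by exact_mod_cast hz
  exact max_eq_left
    ((min_le_right _ _).trans (div_nonpos_of_nonpos_of_nonneg (by linarith) hRr.le))

lemma abs_cutoff_add_one_sub_le {r R : ℕ} (hrR : r < R) (z : ℤ) :
    |cutoff r R (z + 1) - cutoff r R z| ≤ 1 / ((R : ℝ) - r) := by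
  have hRr : (0 : ℝ) < R - r := sub_pos.2 (Nat.cast_lt.2 hrR)
  have hclamp : ∀ a b : ℝ, |max 0 (min 1 a) - max 0 (min 1 b)| ≤ |a - b| := fun a b => by
    rw [max_comm 0, max_comm 0]
    exact (abs_max_sub_max_le_abs _ _ _).trans (by simpa using abs_min_sub_min_le_max 1 a 1 b)
  have hz : |(|z| - |z + 1| : ℤ)| ≤ 1 := (abs_abs_sub_abs_le_abs_sub _ _).trans (by simp)
  refine (hclamp _ _).trans ?_
  rw [div_sub_div_same, abs_div, abs_of_pos hRr, sub_sub_sub_cancel_left]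
  gcongr
  exact_mod_cast hz

noncomputable def band (ρ : ℕ) (z : ℤ) : ℝ := if |z| ≤ ρ then 1 else 0

lemma band_nonneg (ρ : ℕ) (z : ℤ) : 0 ≤ band ρ z := by
  unfold band
  split_ifs <;> norm_num

lemma band_mono {r R : ℕ} (hrR : r ≤ R) (z : ℤ) : band r z ≤ band R z := by
  unfold band
  split_ifs with hr hR <;> norm_num
  exact hR (hr.trans (by exact_mod_cast hrR))

lemma band_le_cutoff_sq {r R : ℕ} (hrR : r < R) (z : ℤ) : band r z ≤ cutoff r R z ^ 2 := by
  unfold band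
  split_ifs with hz
  · rw [cutoff_eq_one hrR hz, one_pow]
  · positivity

lemma cutoff_sq_le_band {r R : ℕ} (hrR : r < R) (z : ℤ) : cutoff r R z ^ 2 ≤ band R z := by
  unfold band
  split_ifs with hz
  · exact pow_le_one₀ (cutoff_nonneg r R z) (cutoff_le_one r R z)
  · rw [cutoff_eq_zero hrR (not_le.1 hz).le]; norm_num

noncomputable def stripBox (hlf : ∀ x, {y | 0 < w0 x y}.Finite) {W₀ : Set V₀}
    (hW₀fin : W₀.Finite) (R : ℕ) : Finset (V₀ × ℤ) :=
  closedNbhd hlf hW₀fin.toFinset ×ˢ Icc (-(R : ℤ) - 1) (R + 1)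

lemma mem_stripBox (hlf : ∀ x, {y | 0 < w0 x y}.Finite) {W₀ : Set V₀} (hW₀fin : W₀.Finite)
    {R : ℕ} {x : V₀ × ℤ} (hx : x.1 ∈ W₀) (hxR : |x.2| ≤ R) : x ∈ stripBox hlf hW₀fin R := by
  refine mem_product.2 ⟨subset_closedNbhd hlf _ (by simpa using hx), ?_⟩
  rw [mem_Icc]
  constructor <;> linarith [abs_le.1 hxR]

lemma stripNbhd_subset_stripBox (hlf : ∀ x, {y | 0 < w0 x y}.Finite) {W₀ : Set V₀}
    (hW₀fin : W₀.Finite) {R : ℕ} {x : V₀ × ℤ} (hx : x.1 ∈ W₀) (hxR : |x.2| ≤ R) :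
    stripNbhd hlf x ⊆ stripBox hlf hW₀fin R := by
  have hxW : x.1 ∈ hW₀fin.toFinset := by simpa using hx
  have hz := abs_le.1 hxR
  intro y hy
  simp only [stripNbhd, mem_union, mem_image, mem_insert, mem_singleton] at hy
  refine mem_product.2 ⟨?_, ?_⟩
  · rcases hy with ⟨a, ha, rfl⟩ | rfl | rfl
    · exact mem_closedNbhd_of_pos hlf hxW (by simpa using ha)
    all_goals exact subset_closedNbhd hlf _ hxW
  · rw [mem_Icc]
    rcases hy with ⟨a, ha, rfl⟩ | rfl | rfl <;> constructor <;> dsimp only <;> linarith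

noncomputable def stripEnergy (w0 : V₀ → V₀ → ℝ) (B : Finset (V₀ × ℤ)) (φ : ℤ → ℝ)
    (f : V₀ × ℤ → ℝ) : ℝ :=
  ∑ x ∈ B, φ x.2 * f x ^ 2 * vmu (wProdZ w0) x

lemma stripEnergy_mono (hnonneg : ∀ x y, 0 ≤ w0 x y) (B : Finset (V₀ × ℤ)) {φ φ' : ℤ → ℝ}
    (hφ : ∀ z, φ z ≤ φ' z) (f : V₀ × ℤ → ℝ) : stripEnergy w0 B φ f ≤ stripEnergy w0 B φ' f :=
  sum_le_sum fun x _ => mul_le_mul_of_nonneg_right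
    (mul_le_mul_of_nonneg_right (hφ x.2) (sq_nonneg _))
    (vmu_nonneg (wProdZ_nonneg hnonneg) x)

lemma stripEnergy_nonneg (hnonneg : ∀ x y, 0 ≤ w0 x y) (B : Finset (V₀ × ℤ)) {φ : ℤ → ℝ}
    (hφ : ∀ z, 0 ≤ φ z) (f : V₀ × ℤ → ℝ) : 0 ≤ stripEnergy w0 B φ f :=
  sum_nonneg fun x _ => mul_nonneg (mul_nonneg (hφ x.2) (sq_nonneg _))
    (vmu_nonneg (wProdZ_nonneg hnonneg) x)

lemma continuousOn_stripEnergy (B : Finset (V₀ × ℤ)) (φ : ℤ → ℝ) {u : V₀ × ℤ → ℝ → ℝ}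
    {s : Set ℝ} (hu : ∀ x, ContinuousOn (u x) s) :
    ContinuousOn (fun t => stripEnergy w0 B φ fun x => u x t) s :=
  continuousOn_finsetSum _ fun x _ => (continuousOn_const.mul ((hu x).pow 2)).mul continuousOn_const

lemma hasDerivAt_stripEnergy (B : Finset (V₀ × ℤ)) (φ : ℤ → ℝ) {u : V₀ × ℤ → ℝ → ℝ}
    {d : V₀ × ℤ → ℝ} {t : ℝ} (hu : ∀ x ∈ B, HasDerivAt (fun s => u x s ^ 2) (d x) t) :
    HasDerivAt (fun s => stripEnergy w0 B φ fun x => u x s)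
      (∑ x ∈ B, φ x.2 * d x * vmu (wProdZ w0) x) t :=
  HasDerivAt.fun_sum fun x hx => ((hu x hx).const_mul (φ x.2)).mul_const _

lemma Qint_eq_integral_stripEnergy (hlf : ∀ x, {y | 0 < w0 x y}.Finite) {W₀ : Set V₀}
    (hW₀fin : W₀.Finite) {u : V₀ × ℤ → ℝ → ℝ}
    (hdir : ∀ x : V₀ × ℤ, x.1 ∉ W₀ → ∀ t ≤ (0:ℝ), u x t = 0)
    {ρ R : ℕ} (hρR : ρ ≤ R) :
    Qint w0 u ρ = ∫ t in (-(ρ : ℝ) ^ 2)..0,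
      stripEnergy w0 (stripBox hlf hW₀fin R) (band ρ) fun x => u x t := by
  refine intervalIntegral.integral_congr fun t ht => ?_
  have ht0 : t ≤ 0 := by
    rw [Set.uIcc_of_le (by nlinarith)] at ht
    exact ht.2
  rw [tsum_eq_sum (s := stripBox hlf hW₀fin R)]
  · exact sum_congr rfl fun x _ => by unfold band; split_ifs <;> ring
  · intro x hx
    split_ifs with hxρ
    · by_cases hxW : x.1 ∈ W₀
      · exact absurd (mem_stripBox hlf hW₀fin hxW (hxρ.trans (by exact_mod_cast hρR))) hx
      · rw [hdir x hxW t ht0]; ring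
    · rfl

lemma continuousOn_of_heat {W₀ : Set V₀} {u v : V₀ × ℤ → ℝ → ℝ}
    (hu : ∀ x : V₀ × ℤ, x.1 ∈ W₀ → ∀ t ≤ (0:ℝ), HasDerivAt (u x) (v x t) t)
    (hdir : ∀ x : V₀ × ℤ, x.1 ∉ W₀ → ∀ t ≤ (0:ℝ), u x t = 0) (x : V₀ × ℤ) :
    ContinuousOn (u x) (Set.Iic 0) := by
  by_cases hx : x.1 ∈ W₀
  · exact fun t ht => (hu x hx t ht).continuousAt.continuousWithinAt
  · exact continuousOn_const.congr fun t ht => hdir x hx t ht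

lemma hasDerivAt_sq_of_heat {W₀ : Set V₀} {u v : V₀ × ℤ → ℝ → ℝ}
    (hu : ∀ x : V₀ × ℤ, x.1 ∈ W₀ → ∀ t ≤ (0:ℝ), HasDerivAt (u x) (v x t) t)
    (hdir : ∀ x : V₀ × ℤ, x.1 ∉ W₀ → ∀ t ≤ (0:ℝ), u x t = 0) (x : V₀ × ℤ) {t : ℝ} (ht : t < 0) :
    HasDerivAt (fun s => u x s ^ 2) (2 * u x t * v x t) t := by
  by_cases hx : x.1 ∈ W₀
  · refine ((hu x hx t ht.le).fun_pow 2).congr_deriv ?_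
    norm_num
  · have hzero : (fun s => u x s ^ 2) =ᶠ[nhds t] fun _ => 0 :=
      Filter.eventually_of_mem (Iio_mem_nhds ht) fun s hs => by
        simp only [hdir x hx s (le_of_lt hs), zero_pow two_ne_zero]
    rw [hdir x hx t ht.le, mul_zero, zero_mul]
    exact (hasDerivAt_const t 0).congr_of_eventuallyEq hzero

lemma band_sub_band_eq_one_of_cutoff_lt {r R : ℕ} (hrR : r < R) {x y : V₀ × ℤ}
    (hxy : 0 < wProdZ w0 x y) (hψ : cutoff r R x.2 < cutoff r R y.2) :
    band R x.2 - band r x.2 = 1 := by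
  have hxr : ¬|x.2| ≤ r := fun h => (cutoff_le_one r R y.2).not_gt (cutoff_eq_one hrR h ▸ hψ)
  have hyR : |y.2| < R := not_le.1 fun h =>
    (cutoff_nonneg r R x.2).not_gt (cutoff_eq_zero hrR h ▸ hψ)
  have hxy1 := abs_sub_snd_eq_one_of_wProdZ_pos hxy fun h => hψ.ne (by rw [h])
  have hxR : |x.2| ≤ R := by
    have := abs_sub_abs_le_abs_sub x.2 y.2
    omega
  simp [band, hxr, hxR]

lemma sum_mul_glap_mul_vmu_stripBox (hnonneg : ∀ x y, 0 ≤ w0 x y)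
    (hlf : ∀ x, {y | 0 < w0 x y}.Finite) {W₀ : Set V₀} (hW₀fin : W₀.Finite) {r R : ℕ}
    (hrR : r < R) {f : V₀ × ℤ → ℝ} (hf : ∀ x, x.1 ∉ W₀ → f x = 0) :
    ∑ x ∈ stripBox hlf hW₀fin R,
        f x * cutoff r R x.2 ^ 2 * (glap (wProdZ w0) f x * vmu (wProdZ w0) x) =
      ∑ x ∈ stripBox hlf hW₀fin R, f x * cutoff r R x.2 ^ 2 *
        ∑ y ∈ stripBox hlf hW₀fin R, wProdZ w0 x y * (f y - f x) := by
  refine sum_congr rfl fun x _ => ?_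
  by_cases hx : x.1 ∈ W₀ ∧ |x.2| ≤ R
  · rw [glap_mul_vmu (wProdZ_nonneg hnonneg x) fun y hy => wProdZ_eq_zero_of_notMem_stripNbhd hlf
      fun h => hy (stripNbhd_subset_stripBox hlf hW₀fin hx.1 hx.2 h)]
  · have hzero : f x * cutoff r R x.2 ^ 2 = 0 := by
      rcases not_and_or.1 hx with h | h
      · rw [hf x h, zero_mul]
      · rw [cutoff_eq_zero hrR (not_le.1 h).le, zero_pow two_ne_zero, mul_zero]
    rw [hzero, zero_mul, zero_mul]

lemma sum_band_mul_sum_wProdZ_cutoff_le (hnonneg : ∀ x y, 0 ≤ w0 x y)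
    (hlf : ∀ x, {y | 0 < w0 x y}.Finite) (B : Finset (V₀ × ℤ)) {r R : ℕ} (hrR : r < R)
    (f : V₀ × ℤ → ℝ) :
    ∑ x ∈ B, (band R x.2 - band r x.2) * f x ^ 2 *
        ∑ y ∈ B, wProdZ w0 x y * (cutoff r R y.2 - cutoff r R x.2) ^ 2 ≤
      (1 / ((R : ℝ) - r)) ^ 2 / 2 * (stripEnergy w0 B (band R) f - stripEnergy w0 B (band r) f) :=
  calc _ ≤ ∑ x ∈ B, (band R x.2 - band r x.2) * f x ^ 2 *
          (2 * vmu w0 x.1 * (1 / ((R : ℝ) - r)) ^ 2) :=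
        sum_le_sum fun x _ => mul_le_mul_of_nonneg_left
          (sum_wProdZ_sub_sq_le hnonneg hlf B (abs_cutoff_add_one_sub_le hrR) x)
          (mul_nonneg (sub_nonneg.2 (band_mono hrR.le _)) (sq_nonneg _))
    _ = _ := by
        rw [stripEnergy, stripEnergy, ← sum_sub_distrib, mul_sum]
        exact sum_congr rfl fun x _ => by rw [vmu_wProdZ hnonneg hlf]; ring

lemma caccioppoli_strip (hsymm : ∀ x y, w0 x y = w0 y x) (hnonneg : ∀ x y, 0 ≤ w0 x y)
    (hlf : ∀ x, {y | 0 < w0 x y}.Finite) {W₀ : Set V₀} (hW₀fin : W₀.Finite) {lam : ℝ}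
    (hP : DirichletPoincare w0 W₀ (closedNbhd hlf hW₀fin.toFinset) lam) {r R : ℕ} (hrR : r < R)
    {f c : V₀ × ℤ → ℝ} (hf : ∀ x, x.1 ∉ W₀ → f x = 0) (hc : ∀ x, c x ≤ lam / 32) :
    ∑ x ∈ stripBox hlf hW₀fin R,
        cutoff r R x.2 ^ 2 * (2 * f x * (glap (wProdZ w0) f x + c x * f x)) * vmu (wProdZ w0) x ≤
      -(lam / 16) * stripEnergy w0 (stripBox hlf hW₀fin R) (fun z => cutoff r R z ^ 2) f +
        5 / 2 / ((R : ℝ) - r) ^ 2 * (stripEnergy w0 (stripBox hlf hW₀fin R) (band R) f -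
          stripEnergy w0 (stripBox hlf hW₀fin R) (band r) f) := by
  set B := stripBox hlf hW₀fin R
  have hsplit : ∑ x ∈ B,
        cutoff r R x.2 ^ 2 * (2 * f x * (glap (wProdZ w0) f x + c x * f x)) * vmu (wProdZ w0) x =
      2 * ∑ x ∈ B, f x * cutoff r R x.2 ^ 2 * ∑ y ∈ B, wProdZ w0 x y * (f y - f x) +
        2 * ∑ x ∈ B, c x * (cutoff r R x.2 ^ 2 * f x ^ 2 * vmu (wProdZ w0) x) := by
    rw [← sum_mul_glap_mul_vmu_stripBox hnonneg hlf hW₀fin hrR hf, mul_sum, mul_sum,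
      ← sum_add_distrib]
    exact sum_congr rfl fun x _ => by ring
  have hcacc := caccioppoli_sum (wProdZ_symm hsymm) (wProdZ_nonneg hnonneg) B f
    (fun x => cutoff r R x.2) (fun x => band R x.2 - band r x.2) (fun x => cutoff_nonneg r R x.2)
    (fun x => sub_nonneg.2 (band_mono hrR.le x.2))
    (fun _ _ => band_sub_band_eq_one_of_cutoff_lt hrR)
  have hpoinc : lam / 2 * ∑ x ∈ B, (f x * cutoff r R x.2) ^ 2 * vmu (wProdZ w0) x ≤
      ∑ x ∈ B, ∑ y ∈ B, wProdZ w0 x y * (f y * cutoff r R y.2 - f x * cutoff r R x.2) ^ 2 :=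
    hP.strip hnonneg hlf _ fun x hx => by simp [hf x hx]
  have hE : ∑ x ∈ B, (f x * cutoff r R x.2) ^ 2 * vmu (wProdZ w0) x =
      stripEnergy w0 B (fun z => cutoff r R z ^ 2) f :=
    sum_congr rfl fun x _ => by ring
  have hpot : ∑ x ∈ B, c x * (cutoff r R x.2 ^ 2 * f x ^ 2 * vmu (wProdZ w0) x) ≤
      lam / 32 * stripEnergy w0 B (fun z => cutoff r R z ^ 2) f := by
    rw [stripEnergy, mul_sum]
    exact sum_le_sum fun x _ => mul_le_mul_of_nonneg_right (hc x) (mul_nonneg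
      (mul_nonneg (sq_nonneg _) (sq_nonneg _)) (vmu_nonneg (wProdZ_nonneg hnonneg) x))
  have hgrad := sum_band_mul_sum_wProdZ_cutoff_le hnonneg hlf B hrR f
  have he : 5 / 2 / ((R : ℝ) - r) ^ 2 = 5 * ((1 / ((R : ℝ) - r)) ^ 2 / 2) := by
    rw [div_pow, one_pow]; ring
  rw [hsplit, he]
  rw [hE] at hpoinc
  linarith

end Strip

section TimeIntegration

open Set MeasureTheory Filter

lemma ContinuousOn.intervalIntegrable_of_nonpos {f : ℝ → ℝ} (hf : ContinuousOn f (Iic 0))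
    {a b : ℝ} (ha : a ≤ 0) (hb : b ≤ 0) : IntervalIntegrable f volume a b :=
  (hf.mono fun t ht => show t ≤ 0 from ht.2.trans (max_le ha hb)).intervalIntegrable

lemma mul_integral_le_of_hasDerivAt_le {F F' g : ℝ → ℝ} {κ a b : ℝ} (hab : a ≤ b)
    (hF : ContinuousOn F (Icc a b)) (hderiv : ∀ t ∈ Ioo a b, HasDerivAt F (F' t) t)
    (hg : IntervalIntegrable g volume a b) (hle : ∀ t ∈ Ioo a b, F' t ≤ -κ * F t + g t)
    (hFb : 0 ≤ F b) : κ * ∫ t in a..b, F t ≤ F a + ∫ t in a..b, g t := by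
  have hFi : IntervalIntegrable F volume a b := hF.intervalIntegrable_of_Icc hab
  have hFTC := intervalIntegral.sub_le_integral_of_hasDeriv_right_of_le hab hF
    (fun t ht => (hderiv t ht).hasDerivWithinAt)
    ((intervalIntegrable_iff_integrableOn_Icc_of_le hab).1 ((hFi.const_mul (-κ)).add hg)) hle
  rw [intervalIntegral.integral_add (hFi.const_mul _) hg, intervalIntegral.integral_const_mul]
    at hFTC
  linarith

lemma ae_restrict_Ioc_nonneg {f : ℝ → ℝ} {a b : ℝ} (hf : ∀ t ∈ Icc a b, 0 ≤ f t) :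
    0 ≤ᵐ[volume.restrict (Ioc a b)] f :=
  (ae_restrict_iff' measurableSet_Ioc).2
    (Eventually.of_forall fun t ht => hf t (Ioc_subset_Icc_self ht))

lemma mul_integral_le_average {F F' g : ℝ → ℝ} {κ α β : ℝ} (hαβ : α ≤ β) (hβ : β ≤ 0)
    (hκ : 0 ≤ κ) (hF : ContinuousOn F (Icc α 0)) (hF0 : ∀ t ∈ Icc α 0, 0 ≤ F t)
    (hderiv : ∀ t ∈ Ioo α 0, HasDerivAt F (F' t) t) (hg : IntervalIntegrable g volume α 0)
    (hg0 : ∀ t ∈ Icc α 0, 0 ≤ g t) (hle : ∀ t ∈ Ioo α 0, F' t ≤ -κ * F t + g t) :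
    (β - α) * (κ * ∫ t in β..0, F t) ≤ (∫ t in α..β, F t) + (β - α) * ∫ t in α..0, g t := by
  have hα : α ≤ 0 := hαβ.trans hβ
  have hFi : IntervalIntegrable F volume α β :=
    (hF.mono (Icc_subset_Icc_right hβ)).intervalIntegrable_of_Icc hαβ
  have hpoint : ∀ s ∈ Icc α β, κ * ∫ t in β..0, F t ≤ F s + ∫ t in α..0, g t := by
    rintro s ⟨hαs, hsβ⟩
    have hs : s ≤ 0 := hsβ.trans hβ
    have hsub : Icc s 0 ⊆ Icc α 0 := Icc_subset_Icc_left hαs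
    have hmain := mul_integral_le_of_hasDerivAt_le hs (hF.mono hsub)
      (fun t ht => hderiv t (Ioo_subset_Ioo_left hαs ht)) (hg.mono_set (by
        rw [uIcc_of_le hs, uIcc_of_le hα]; exact hsub))
      (fun t ht => hle t (Ioo_subset_Ioo_left hαs ht)) (hF0 0 ⟨hα, le_rfl⟩)
    have hFβ : ∫ t in β..0, F t ≤ ∫ t in s..0, F t :=
      intervalIntegral.integral_mono_interval hsβ hβ le_rfl
        (ae_restrict_Ioc_nonneg fun t ht => hF0 t (hsub ht))
        ((hF.mono hsub).intervalIntegrable_of_Icc hs)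
    have hgα : ∫ t in s..0, g t ≤ ∫ t in α..0, g t :=
      intervalIntegral.integral_mono_interval hαs hs le_rfl (ae_restrict_Ioc_nonneg hg0) hg
    nlinarith [mul_le_mul_of_nonneg_left hFβ hκ]
  have havg := intervalIntegral.integral_mono_on hαβ intervalIntegrable_const
    (hFi.add intervalIntegrable_const) hpoint
  rwa [intervalIntegral.integral_add hFi intervalIntegrable_const, intervalIntegral.integral_const,
    intervalIntegral.integral_const, smul_eq_mul, smul_eq_mul] at havg

lemma integral_le_of_hasDerivAt_le {F F' G H : ℝ → ℝ} {κ k r R : ℝ} (hκ : 0 < κ) (hk : 0 ≤ k)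
    (hr : 0 ≤ r) (hrR : r < R) (hF : ContinuousOn F (Iic 0)) (hG : ContinuousOn G (Iic 0))
    (hH : ContinuousOn H (Iic 0)) (hH0 : ∀ t ≤ 0, 0 ≤ H t) (hHF : ∀ t ≤ 0, H t ≤ F t)
    (hFG : ∀ t ≤ 0, F t ≤ G t) (hderiv : ∀ t < 0, HasDerivAt F (F' t) t)
    (hle : ∀ t < 0, F' t ≤ -κ * F t + k / (R - r) ^ 2 * (G t - H t)) :
    ∫ t in -r ^ 2..0, H t ≤
      (1 + k) / κ / (R - r) ^ 2 * ((∫ t in -R ^ 2..0, G t) - ∫ t in -r ^ 2..0, H t) := by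
  have hb : -R ^ 2 ≤ -r ^ 2 := by nlinarith
  have ha : -r ^ 2 ≤ 0 := by nlinarith
  have hRr : 0 < (R - r) ^ 2 := by nlinarith
  have hi : ∀ {f : ℝ → ℝ}, ContinuousOn f (Iic 0) → ∀ {s s' : ℝ}, s ≤ 0 → s' ≤ 0 →
      IntervalIntegrable f volume s s' := fun hf _ _ => hf.intervalIntegrable_of_nonpos
  have hF0 : ∀ t ≤ 0, 0 ≤ F t := fun t ht => (hH0 t ht).trans (hHF t ht)
  set e := k / (R - r) ^ 2
  have havg := mul_integral_le_average (g := fun t => e * (G t - H t)) hb ha hκ.le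
    (hF.mono Icc_subset_Iic_self) (fun t ht => hF0 t ht.2) (fun t ht => hderiv t ht.2)
    ((hi (hG.sub hH) (hb.trans ha) le_rfl).const_mul e)
    (fun t ht => mul_nonneg (by positivity) (sub_nonneg.2 ((hHF t ht.2).trans (hFG t ht.2))))
    (fun t ht => hle t ht.2)
  rw [intervalIntegral.integral_const_mul,
    intervalIntegral.integral_sub (hi hG (hb.trans ha) le_rfl) (hi hH (hb.trans ha) le_rfl)]
    at havg
  have hHF' := intervalIntegral.integral_mono_on ha (hi hH ha le_rfl) (hi hF ha le_rfl)
    fun t ht => hHF t ht.2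
  have hHG := intervalIntegral.integral_mono_on ha (hi hH ha le_rfl) (hi hG ha le_rfl)
    fun t ht => (hHF t ht.2).trans (hFG t ht.2)
  have hFG' := intervalIntegral.integral_mono_on hb (hi hF (hb.trans ha) ha)
    (hi hG (hb.trans ha) ha) fun t ht => hFG t (ht.2.trans ha)
  have hF0' := intervalIntegral.integral_nonneg (μ := volume) hb fun t ht => hF0 t (ht.2.trans ha)
  have hHR := intervalIntegral.integral_mono_interval hb ha le_rfl
    (ae_restrict_Ioc_nonneg fun t ht => hH0 t ht.2) (hi hH (hb.trans ha) le_rfl)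
  have hGsplit := intervalIntegral.integral_add_adjacent_intervals (hi hG (hb.trans ha) ha)
    (hi hG ha le_rfl)
  set J := ∫ t in -r ^ 2..0, H t
  set D := (∫ t in -R ^ 2..0, G t) - J
  have hLJ : (R ^ 2 - r ^ 2) * (κ * J) ≤ D + (R ^ 2 - r ^ 2) * (e * D) := by
    have hL : 0 ≤ R ^ 2 - r ^ 2 := by linarith
    nlinarith [mul_le_mul_of_nonneg_left hHF' (mul_nonneg hL hκ.le),
      mul_le_mul_of_nonneg_left hHR (mul_nonneg hL (by positivity : 0 ≤ e))]
  have hκJ : (R - r) ^ 2 * (κ * J - e * D) ≤ D := by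
    rcases le_or_gt 0 (κ * J - e * D) with h | h
    · nlinarith [mul_le_mul_of_nonneg_right (by nlinarith : (R - r) ^ 2 ≤ R ^ 2 - r ^ 2) h]
    · nlinarith [mul_neg_of_pos_of_neg hRr h]
  have he : (R - r) ^ 2 * e = k := mul_div_cancel₀ k hRr.ne'
  rw [div_div, div_mul_eq_mul_div, le_div_iff₀ (by positivity)]
  nlinarith

end TimeIntegration

theorem reverse_poincare_general {V₀ : Type*} (w0 : V₀ → V₀ → ℝ)
    (hsymm : ∀ x y, w0 x y = w0 y x) (hnonneg : ∀ x y, 0 ≤ w0 x y)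
    (hlf : ∀ x, {y | 0 < w0 x y}.Finite)
    (hconn : ∀ x y : V₀, Relation.ReflTransGen (fun a b => 0 < w0 a b) x y)
    (W₀ : Set V₀) (hW₀fin : W₀.Finite) (hW₀proper : W₀ ≠ Set.univ) :
    ∃ ε > (0:ℝ), ∃ C > (0:ℝ),
      ∀ (c : V₀ × ℤ → ℝ) (u : V₀ × ℤ → ℝ → ℝ),
        (∀ x, c x ≤ ε) →
        (∀ x : V₀ × ℤ, x.1 ∈ W₀ → ∀ t ≤ (0:ℝ),
          HasDerivAt (u x) (glap (wProdZ w0) (fun y => u y t) x + c x * u x t) t) →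
        (∀ x : V₀ × ℤ, x.1 ∉ W₀ → ∀ t ≤ (0:ℝ), u x t = 0) →
        ∀ r R : ℕ, 0 < r → r < R →
          Qint w0 u r ≤ C / ((R : ℝ) - (r : ℝ))^2 * (Qint w0 u R - Qint w0 u r) := by
  obtain ⟨lam, hlam, hP⟩ := exists_dirichletPoincare hnonneg hlf hconn hW₀fin hW₀proper
  refine ⟨lam / 32, by positivity, 56 / lam, by positivity, fun c u hc hu hdir r R _ hrR => ?_⟩
  set B := stripBox hlf hW₀fin R
  have hcont : ∀ φ, ContinuousOn (fun t => stripEnergy w0 B φ fun x => u x t) (Set.Iic 0) :=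
    fun φ => continuousOn_stripEnergy B φ (continuousOn_of_heat hu hdir)
  have key := integral_le_of_hasDerivAt_le (κ := lam / 16) (k := 5 / 2) (by positivity)
    (by norm_num) (Nat.cast_nonneg r) (Nat.cast_lt.2 hrR) (hcont _) (hcont (band R))
    (hcont (band r)) (fun t _ => stripEnergy_nonneg hnonneg B (band_nonneg r) _)
    (fun t _ => stripEnergy_mono hnonneg B (band_le_cutoff_sq hrR) _)
    (fun t _ => stripEnergy_mono hnonneg B (cutoff_sq_le_band hrR) _)
    (fun t ht => hasDerivAt_stripEnergy B _ fun x _ => hasDerivAt_sq_of_heat hu hdir x ht)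
    (fun t ht => caccioppoli_strip hsymm hnonneg hlf hW₀fin hP hrR
      (fun x hx => hdir x hx t ht.le) hc)
  rw [Qint_eq_integral_stripEnergy hlf hW₀fin hdir hrR.le,
    Qint_eq_integral_stripEnergy hlf hW₀fin hdir le_rfl]
  convert key using 2
  field_simp
  norm_num

/-- Reverse Poincaré inequality for ancient solutions of the heat equation with small
potential on a strip-type graph, with Dirichlet condition outside `W = W₀ × ℤ`. -/
theorem reverse_poincare {V₀ : Type*} (w0 : V₀ → V₀ → ℝ)
    (hsymm : ∀ x y, w0 x y = w0 y x) (hnonneg : ∀ x y, 0 ≤ w0 x y)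
    (hlf : ∀ x, {y | 0 < w0 x y}.Finite)
    (hconn : ∀ x y : V₀, Relation.ReflTransGen (fun a b => 0 < w0 a b) x y)
    (W₀ : Set V₀) (hW₀fin : W₀.Finite) (hW₀ne : W₀.Nonempty) (hW₀proper : W₀ ≠ Set.univ) :
    ∃ ε > (0:ℝ), ∃ C > (0:ℝ),
      ∀ (c : V₀ × ℤ → ℝ) (u : V₀ × ℤ → ℝ → ℝ),
        (∀ x, c x ≤ ε) →
        (∀ x : V₀ × ℤ, x.1 ∈ W₀ → ∀ t ≤ (0:ℝ),
          HasDerivAt (u x) (glap (wProdZ w0) (fun y => u y t) x + c x * u x t) t) →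
        (∀ x : V₀ × ℤ, x.1 ∉ W₀ → ∀ t ≤ (0:ℝ), u x t = 0) →
        ∀ r R : ℕ, 0 < r → r < R →
          Qint w0 u r ≤ C / ((R : ℝ) - (r : ℝ))^2 * (Qint w0 u R - Qint w0 u r) :=
  reverse_poincare_general w0 hsymm hnonneg hlf hconn W₀ hW₀fin hW₀proper
end

section
/- Let G = (V, E, w) be a finite connected weighted graph and u: V × ℝ_{≤0} → ℝ an ancient solution of ∂_t u = Δu. If |u(x,t)| ≤ C(1 + √(-t))^d for positive constants C, d and all (x,t) ∈ V × ℝ_{≤0}, then u is constant in time and u(·,t) is a harmonic function on G (i.e., Δu = 0). -/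
open scoped BigOperators

noncomputable def vmuF {V : Type*} [Fintype V] (w : V → V → ℝ) (x : V) : ℝ := ∑ y, w x y

noncomputable def glapF {V : Type*} [Fintype V] (w : V → V → ℝ) (f : V → ℝ) (x : V) : ℝ :=
  (∑ y, w x y * (f y - f x)) / vmuF w x

/-!
Along the heat flow the weighted energy `φ = ∑ μ u²` and the Dirichlet energy `E` satisfy
`φ' = -E` and `E' = -4 ∑ μ (Δu)²`; Cauchy–Schwarz applied to `E = -2 ∑ μ u Δu` gives
`φ'² ≤ φ φ''`, so `φ` is log-convex. If `E(T) > 0` for some `T ≤ 0`, log-convexity makes `φ`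
grow backwards in time at least like `exp ((E(T) / φ(T)) (T - s))`, which the polynomial bound
`φ(s) = O((1 + √(-s)) ^ (2d))` forbids. Hence `E ≡ 0`, so `Δu ≡ 0` and `∂ₜu = 0`.
-/

open Finset Filter Topology Real

section GraphCalculus

variable {V : Type*}

lemma dirichletForm_term_self_nonneg {w : V → V → ℝ} (hw : ∀ x y, 0 ≤ w x y) (f : V → ℝ)
    (x y : V) : 0 ≤ w x y * (f y - f x) * (f y - f x) := by
  rw [mul_assoc]; exact mul_nonneg (hw x y) (mul_self_nonneg _)

variable [Fintype V] (w : V → V → ℝ)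

noncomputable def dirichletForm (f g : V → ℝ) : ℝ := ∑ x, ∑ y, w x y * (f y - f x) * (g y - g x)

noncomputable def weightedNormSq (f : V → ℝ) : ℝ := ∑ x, vmuF w x * f x ^ 2

variable {w}

lemma dirichletForm_comm (f g : V → ℝ) : dirichletForm w f g = dirichletForm w g f := by
  simp only [dirichletForm, mul_right_comm]

lemma dirichletForm_self_nonneg (hw : ∀ x y, 0 ≤ w x y) (f : V → ℝ) :
    0 ≤ dirichletForm w f f :=
  sum_nonneg fun x _ => sum_nonneg fun y _ => dirichletForm_term_self_nonneg hw f x y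

lemma vmuF_nonneg (hw : ∀ x y, 0 ≤ w x y) (x : V) : 0 ≤ vmuF w x :=
  sum_nonneg fun y _ => hw x y

lemma weightedNormSq_nonneg (hw : ∀ x y, 0 ≤ w x y) (f : V → ℝ) : 0 ≤ weightedNormSq w f :=
  sum_nonneg fun x _ => mul_nonneg (vmuF_nonneg hw x) (sq_nonneg _)

lemma weightedNormSq_le (hw : ∀ x y, 0 ≤ w x y) {f : V → ℝ} {B : ℝ} (hf : ∀ x, |f x| ≤ B) :
    weightedNormSq w f ≤ (∑ x, vmuF w x) * B ^ 2 := by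
  rw [weightedNormSq, sum_mul]
  exact sum_le_sum fun x _ => mul_le_mul_of_nonneg_left
    (sq_le_sq' (neg_le_of_abs_le (hf x)) (le_of_abs_le (hf x))) (vmuF_nonneg hw x)

-- When `vmuF w x = 0` the division in `glapF` is junk, but then every `w x y` vanishes.
lemma vmuF_mul_glapF (hw : ∀ x y, 0 ≤ w x y) (f : V → ℝ) (x : V) :
    vmuF w x * glapF w f x = ∑ y, w x y * (f y - f x) := by
  by_cases h : vmuF w x = 0
  · have hwx : ∀ y, w x y = 0 := fun y =>
      (sum_eq_zero_iff_of_nonneg fun y _ => hw x y).1 h y (mem_univ y)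
    simp [h, hwx]
  · rw [glapF, mul_div_cancel₀ _ h]

lemma dirichletForm_eq_neg_two_mul_sum (hsymm : ∀ x y, w x y = w y x) (hw : ∀ x y, 0 ≤ w x y)
    (f g : V → ℝ) : dirichletForm w f g = -2 * ∑ x, vmuF w x * f x * glapF w g x := by
  have hswap : ∑ x, ∑ y, w x y * f y * (g y - g x) = -∑ x, ∑ y, w x y * f x * (g y - g x) := by
    rw [sum_comm, ← sum_neg_distrib]
    refine sum_congr rfl fun x _ => ?_
    rw [← sum_neg_distrib]
    exact sum_congr rfl fun y _ => by rw [hsymm]; ring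
  calc dirichletForm w f g
      = ∑ x, ∑ y, w x y * f y * (g y - g x) - ∑ x, ∑ y, w x y * f x * (g y - g x) := by
        simp only [dirichletForm, ← sum_sub_distrib]; congr! 2; ring
    _ = -2 * ∑ x, ∑ y, w x y * f x * (g y - g x) := by rw [hswap]; ring
    _ = -2 * ∑ x, vmuF w x * f x * glapF w g x := by
        congr 1
        refine sum_congr rfl fun x _ => ?_
        rw [mul_right_comm, vmuF_mul_glapF hw, sum_mul]
        exact sum_congr rfl fun y _ => by ring

lemma dirichletForm_sq_le (hsymm : ∀ x y, w x y = w y x) (hw : ∀ x y, 0 ≤ w x y)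
    (f : V → ℝ) :
    dirichletForm w f f ^ 2 ≤ 4 * (weightedNormSq w f * weightedNormSq w (glapF w f)) := by
  have hcs := sum_sq_le_sum_mul_sum_of_sq_le_mul univ
    (r := fun x => vmuF w x * f x * glapF w f x)
    (fun x _ => mul_nonneg (vmuF_nonneg hw x) (sq_nonneg (f x)))
    (fun x _ => mul_nonneg (vmuF_nonneg hw x) (sq_nonneg (glapF w f x)))
    (fun x _ => le_of_eq (by ring))
  rw [dirichletForm_eq_neg_two_mul_sum hsymm hw]
  unfold weightedNormSq
  nlinarith [hcs]

lemma glapF_eq_zero_of_dirichletForm_self_eq_zero (hw : ∀ x y, 0 ≤ w x y) {f : V → ℝ}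
    (hf : dirichletForm w f f = 0) (x : V) : glapF w f x = 0 := by
  have hterm : ∀ y, w x y * (f y - f x) * (f y - f x) = 0 := fun y =>
    (sum_eq_zero_iff_of_nonneg fun y _ => dirichletForm_term_self_nonneg hw f x y).1
      ((sum_eq_zero_iff_of_nonneg fun x _ => sum_nonneg fun y _ =>
        dirichletForm_term_self_nonneg hw f x y).1 hf x (mem_univ x)) y (mem_univ y)
  have hterm' : ∀ y, w x y * (f y - f x) = 0 := fun y => by
    rcases mul_eq_zero.1 (hterm y) with h | h
    · exact h
    · rw [h, mul_zero]
  rw [glapF, sum_eq_zero fun y _ => hterm' y, zero_div]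

end GraphCalculus

section HeatFlow

variable {V : Type*} [Fintype V] {w : V → V → ℝ} {u : V → ℝ → ℝ} {t : ℝ}

lemma hasDerivAt_weightedNormSq {u' : V → ℝ} (hu : ∀ x, HasDerivAt (u x) (u' x) t) :
    HasDerivAt (fun s => weightedNormSq w fun x => u x s)
      (2 * ∑ x, vmuF w x * u x t * u' x) t := by
  have := HasDerivAt.fun_sum fun x (_ : x ∈ univ) => ((hu x).pow 2).const_mul (vmuF w x)
  refine this.congr_deriv ?_
  rw [mul_sum]
  exact sum_congr rfl fun x _ => by push_cast; ring

lemma hasDerivAt_dirichletForm_self {u' : V → ℝ} (hu : ∀ x, HasDerivAt (u x) (u' x) t) :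
    HasDerivAt (fun s => dirichletForm w (fun x => u x s) (fun x => u x s))
      (2 * dirichletForm w (fun x => u x t) u') t := by
  have := HasDerivAt.fun_sum fun x (_ : x ∈ univ) => HasDerivAt.fun_sum fun y (_ : y ∈ univ) =>
    (((hu y).sub (hu x)).mul ((hu y).sub (hu x))).const_mul (w x y)
  simp only [dirichletForm, mul_assoc]
  refine this.congr_deriv ?_
  simp only [mul_sum]
  exact sum_congr rfl fun x _ => sum_congr rfl fun y _ => by simp only [Pi.sub_apply]; ring

variable (hsymm : ∀ x y, w x y = w y x) (hw : ∀ x y, 0 ≤ w x y)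
  (hheat : ∀ x, HasDerivAt (u x) (glapF w (fun y => u y t) x) t)
include hsymm hw hheat

lemma hasDerivAt_weightedNormSq_of_heat :
    HasDerivAt (fun s => weightedNormSq w fun x => u x s)
      (-dirichletForm w (fun x => u x t) (fun x => u x t)) t := by
  refine (hasDerivAt_weightedNormSq hheat).congr_deriv ?_
  rw [dirichletForm_eq_neg_two_mul_sum hsymm hw]
  ring

lemma hasDerivAt_neg_dirichletForm_self_of_heat :
    HasDerivAt (fun s => -dirichletForm w (fun x => u x s) (fun x => u x s))
      (4 * weightedNormSq w (glapF w fun x => u x t)) t := by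
  refine (hasDerivAt_dirichletForm_self hheat).neg.congr_deriv ?_
  rw [dirichletForm_comm, dirichletForm_eq_neg_two_mul_sum hsymm hw, weightedNormSq]
  simp only [sq, mul_assoc]
  ring

end HeatFlow

section RealAnalysis

open Set

lemma monotoneOn_Iic_of_hasDerivAt_nonneg {f f' : ℝ → ℝ} {T : ℝ}
    (hf : ∀ t ≤ T, HasDerivAt f (f' t) t) (hf' : ∀ t ≤ T, 0 ≤ f' t) : MonotoneOn f (Iic T) :=
  monotoneOn_of_hasDerivWithinAt_nonneg (convex_Iic T)
    (fun t ht => (hf t ht).continuousAt.continuousWithinAt)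
    (fun t ht => (hf t (interior_subset (s := Iic T) ht)).hasDerivWithinAt)
    (fun t ht => hf' t (interior_subset (s := Iic T) ht))

lemma antitoneOn_Iic_of_hasDerivAt_nonpos {f f' : ℝ → ℝ} {T : ℝ}
    (hf : ∀ t ≤ T, HasDerivAt f (f' t) t) (hf' : ∀ t ≤ T, f' t ≤ 0) : AntitoneOn f (Iic T) :=
  antitoneOn_of_hasDerivWithinAt_nonpos (convex_Iic T)
    (fun t ht => (hf t ht).continuousAt.continuousWithinAt)
    (fun t ht => (hf t (interior_subset (s := Iic T) ht)).hasDerivWithinAt)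
    (fun t ht => hf' t (interior_subset (s := Iic T) ht))

-- `φ' ^ 2 ≤ φ * φ''` says that `log φ` is convex, so it lies above its tangent line at `T`.
lemma mul_exp_le_of_sq_deriv_le_mul_deriv2 {φ φ' φ'' : ℝ → ℝ} {T s : ℝ}
    (hφ : ∀ t ≤ T, HasDerivAt φ (φ' t) t) (hφ' : ∀ t ≤ T, HasDerivAt φ' (φ'' t) t)
    (hφ'_nonpos : ∀ t ≤ T, φ' t ≤ 0) (hconv : ∀ t ≤ T, φ' t ^ 2 ≤ φ t * φ'' t) (hT : 0 < φ T)
    (hs : s ≤ T) : φ T * exp (φ' T / φ T * (s - T)) ≤ φ s := by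
  have hpos : ∀ t ≤ T, 0 < φ t := fun t ht =>
    hT.trans_le (antitoneOn_Iic_of_hasDerivAt_nonpos hφ hφ'_nonpos ht self_mem_Iic ht)
  have hlogDeriv : MonotoneOn (fun t => φ' t / φ t) (Iic T) :=
    monotoneOn_Iic_of_hasDerivAt_nonneg (fun t ht => (hφ' t ht).div (hφ t ht) (hpos t ht).ne')
      fun t ht => div_nonneg (by linarith [hconv t ht]) (sq_nonneg _)
  have hlog : AntitoneOn (fun t => log (φ t) - φ' T / φ T * t) (Iic T) :=
    antitoneOn_Iic_of_hasDerivAt_nonpos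
      (fun t ht => ((hφ t ht).log (hpos t ht).ne').sub ((hasDerivAt_id t).const_mul _))
      fun t ht => by simpa using hlogDeriv ht self_mem_Iic ht
  have hlogs := hlog hs self_mem_Iic hs
  calc φ T * exp (φ' T / φ T * (s - T)) = exp (log (φ T) + φ' T / φ T * (s - T)) := by
        rw [exp_add, exp_log hT]
    _ ≤ exp (log (φ s)) := exp_le_exp.2 (by simp only at hlogs; linarith)
    _ = φ s := exp_log (hpos s hs)

lemma tendsto_one_add_sqrt_rpow_mul_exp_neg_mul_atTop (p : ℝ) {a : ℝ} (ha : 0 < a) :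
    Tendsto (fun r => (1 + √r) ^ p * exp (-a * r)) atTop (𝓝 0) := by
  have hlim : Tendsto (fun r => exp (2 * a) * ((1 + √r) ^ p * exp (-a * (1 + √r)))) atTop
      (𝓝 0) := by
    simpa using ((tendsto_rpow_mul_exp_neg_mul_atTop_nhds_zero p a ha).comp
      (tendsto_atTop_add_const_left _ 1 tendsto_sqrt_atTop)).const_mul (exp (2 * a))
  -- `√r ≤ 1 + r` gives `exp (-a * r) ≤ exp (2 * a) * exp (-a * (1 + √r))`.
  refine tendsto_of_tendsto_of_tendsto_of_le_of_le' tendsto_const_nhds hlim ?_ ?_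
  · filter_upwards with r using by positivity
  · filter_upwards [eventually_ge_atTop 0] with r hr
    rw [mul_left_comm, ← exp_add]
    gcongr
    nlinarith [sq_sqrt hr, sq_nonneg (√r - 1)]

lemma nonpos_of_mul_exp_le_one_add_sqrt_rpow {b c K p T : ℝ} (hc : c < 0)
    (h : ∀ s ≤ T, b * exp (c * (s - T)) ≤ K * (1 + √(-s)) ^ p) : b ≤ 0 := by
  have hlim := (tendsto_one_add_sqrt_rpow_mul_exp_neg_mul_atTop p (neg_pos.2 hc)).const_mul
    (K * exp (c * T))
  rw [mul_zero] at hlim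
  refine ge_of_tendsto hlim ?_
  filter_upwards [eventually_ge_atTop (-T)] with r hr
  calc b = b * exp (c * (-r - T)) * exp (c * (r + T)) := by
        rw [mul_assoc, ← exp_add]; ring_nf; rw [exp_zero, mul_one]
    _ ≤ K * (1 + √(-(-r))) ^ p * exp (c * (r + T)) :=
        mul_le_mul_of_nonneg_right (h (-r) (by linarith)) (exp_pos _).le
    _ = K * exp (c * T) * ((1 + √r) ^ p * exp (-(-c) * r)) := by
        rw [neg_neg, neg_neg, mul_add, exp_add]; ring

end RealAnalysis

section AncientSolutions

variable {V : Type*} [Fintype V] {w : V → V → ℝ} {u : V → ℝ → ℝ}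

lemma dirichletForm_self_eq_zero_of_ancient_heat (hsymm : ∀ x y, w x y = w y x)
    (hw : ∀ x y, 0 ≤ w x y)
    (hheat : ∀ x, ∀ t ≤ (0:ℝ), HasDerivAt (u x) (glapF w (fun y => u y t) x) t) {C d : ℝ}
    (hgrowth : ∀ x, ∀ t ≤ (0:ℝ), |u x t| ≤ C * (1 + √(-t)) ^ d) {T : ℝ} (hT : T ≤ 0) :
    dirichletForm w (fun x => u x T) (fun x => u x T) = 0 := by
  set φ := fun t => weightedNormSq w fun x => u x t
  set E := fun t => dirichletForm w (fun x => u x t) (fun x => u x t)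
  by_contra hne
  have hEpos : 0 < E T := (dirichletForm_self_nonneg hw _).lt_of_ne' hne
  have hφT : 0 < φ T := by
    refine (weightedNormSq_nonneg hw _).lt_of_ne' fun h0 => hEpos.ne' ?_
    simpa [φ, h0] using dirichletForm_sq_le hsymm hw (fun x => u x T)
  have hexp : ∀ s ≤ T, φ T * exp (-E T / φ T * (s - T)) ≤ φ s := fun s hs =>
    mul_exp_le_of_sq_deriv_le_mul_deriv2
      (fun t ht => hasDerivAt_weightedNormSq_of_heat hsymm hw fun x => hheat x t (ht.trans hT))
      (fun t ht => hasDerivAt_neg_dirichletForm_self_of_heat hsymm hw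
        fun x => hheat x t (ht.trans hT))
      (fun t _ => neg_nonpos.2 (dirichletForm_self_nonneg hw _))
      (fun t _ => by rw [neg_sq]; exact dirichletForm_sq_le hsymm hw _ |>.trans_eq (by ring))
      hφT hs
  have hpoly : ∀ s ≤ T, φ s ≤ (∑ x, vmuF w x) * C ^ 2 * (1 + √(-s)) ^ (2 * d) := fun s hs =>
    calc φ s ≤ (∑ x, vmuF w x) * (C * (1 + √(-s)) ^ d) ^ 2 :=
          weightedNormSq_le hw fun x => hgrowth x s (hs.trans hT)
      _ = (∑ x, vmuF w x) * C ^ 2 * (1 + √(-s)) ^ (2 * d) := by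
          rw [mul_pow, ← rpow_mul_natCast (by positivity)]; push_cast; ring_nf
  have hφT_nonpos := nonpos_of_mul_exp_le_one_add_sqrt_rpow
    (div_neg_of_neg_of_pos (neg_neg_of_pos hEpos) hφT) fun s hs => (hexp s hs).trans (hpoly s hs)
  linarith

end AncientSolutions

theorem ancient_caloric_finite_graph_general {V : Type*} [Fintype V] (w : V → V → ℝ)
    (hsymm : ∀ x y, w x y = w y x) (hnonneg : ∀ x y, 0 ≤ w x y)
    (u : V → ℝ → ℝ)
    (hheat : ∀ x : V, ∀ t ≤ (0:ℝ), HasDerivAt (u x) (glapF w (fun y => u y t) x) t)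
    (C d : ℝ)
    (hgrowth : ∀ x : V, ∀ t ≤ (0:ℝ), |u x t| ≤ C * (1 + Real.sqrt (-t)) ^ d) :
    (∀ x : V, ∀ s ≤ (0:ℝ), ∀ t ≤ (0:ℝ), u x s = u x t) ∧
    (∀ x : V, ∀ t ≤ (0:ℝ), glapF w (fun y => u y t) x = 0) := by
  have hharmonic : ∀ x : V, ∀ t ≤ (0:ℝ), glapF w (fun y => u y t) x = 0 := fun x t ht =>
    glapF_eq_zero_of_dirichletForm_self_eq_zero hnonneg
      (dirichletForm_self_eq_zero_of_ancient_heat hsymm hnonneg hheat hgrowth ht) x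
  refine ⟨fun x s hs t ht => ?_, hharmonic⟩
  have hlip := (convex_Iic (0:ℝ)).norm_image_sub_le_of_norm_hasDerivWithin_le (C := 0)
    (fun r hr => (hharmonic x r hr ▸ hheat x r hr).hasDerivWithinAt) (fun _ _ => by simp) ht hs
  simpa [sub_eq_zero] using hlip

/-- On a finite connected weighted graph, an ancient solution of the heat equation with
polynomial growth in time is constant in time and harmonic. -/
theorem ancient_caloric_finite_graph {V : Type*} [Fintype V] (w : V → V → ℝ)
    (hsymm : ∀ x y, w x y = w y x) (hnonneg : ∀ x y, 0 ≤ w x y)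
    (hconn : ∀ x y : V, Relation.ReflTransGen (fun a b => 0 < w a b) x y)
    (u : V → ℝ → ℝ)
    (hheat : ∀ x : V, ∀ t ≤ (0:ℝ), HasDerivAt (u x) (glapF w (fun y => u y t) x) t)
    (C d : ℝ) (hC : 0 < C) (hd : 0 < d)
    (hgrowth : ∀ x : V, ∀ t ≤ (0:ℝ), |u x t| ≤ C * (1 + Real.sqrt (-t)) ^ d) :
    (∀ x : V, ∀ s ≤ (0:ℝ), ∀ t ≤ (0:ℝ), u x s = u x t) ∧
    (∀ x : V, ∀ t ≤ (0:ℝ), glapF w (fun y => u y t) x = 0) :=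
  ancient_caloric_finite_graph_general w hsymm hnonneg u hheat C d hgrowth
end
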